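/- arXiv:1205.5247 — 3 statements merged into one kernel-verified Lean document; each statement's English description precedes it below -/
import Mathlib

section
/- Let M be a matroid on a finite linearly ordered ground set E and A ⊆ E. Define Q_M(A) as the set of elements e ∈ A such that e is the smallest element of some circuit of M contained in A. Then |Q_M(A)| = |A| − r_M(A), the nullity of A. -/
open Set

/-- `e` is the smallest element of `C`. -/
def SmallestIn {α : Type*} [LinearOrder α] (e : α) (C : Set α) : Prop :=
  e ∈ C ∧ ∀ f ∈ C, e ≤ f

/-- `C` is a circuit of `M`: a minimal dependent set. -/
def IsCircuit {α : Type*} (M : Matroid α) (C : Set α) : Prop :=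
  ¬ M.Indep C ∧ ∀ x ∈ C, M.Indep (C \ {x})

/-- A cocircuit is a circuit of the dual matroid. -/
def IsCocircuit {α : Type*} (M : Matroid α) (C : Set α) : Prop :=
  IsCircuit M✶ C

/-- `P_M(A)`: elements outside `A` that are smallest in some cocircuit avoiding `A`. -/
def Pset {α : Type*} [LinearOrder α] (M : Matroid α) (A : Set α) : Set α :=
  {e | e ∉ A ∧ ∃ C, IsCocircuit M C ∧ C ⊆ Aᶜ ∧ SmallestIn e C}

/-- `Q_M(A)`: elements of `A` that are smallest in some circuit contained in `A`. -/
def Qset {α : Type*} [LinearOrder α] (M : Matroid α) (A : Set α) : Set α :=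
  {e | e ∈ A ∧ ∃ C, IsCircuit M C ∧ C ⊆ A ∧ SmallestIn e C}

/-- Externally active elements of `A`. -/
def ExtSet {α : Type*} [LinearOrder α] (M : Matroid α) (A : Set α) : Set α :=
  {e | e ∉ A ∧ ∃ C, IsCircuit M C ∧ C ⊆ A ∪ {e} ∧ SmallestIn e C}

/-- Internally active elements of `A`. -/
def IntSet {α : Type*} [LinearOrder α] (M : Matroid α) (A : Set α) : Set α :=
  {e | e ∈ A ∧ ∃ C, IsCocircuit M C ∧ C ⊆ Aᶜ ∪ {e} ∧ SmallestIn e C}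

/-- The rank of a set: the largest cardinality of an independent subset. -/
noncomputable def rk {α : Type*} (M : Matroid α) (A : Set α) : ℕ :=
  sSup (Set.ncard '' {I | I ⊆ A ∧ M.Indep I})

/-- Matroid perspective (strong-map / quotient condition, form (MP3)). -/
def Perspective {α : Type*} (M M' : Matroid α) : Prop :=
  ∀ C D : Set α, IsCircuit M C → IsCocircuit M' D → (C ∩ D).ncard ≠ 1

/-- Rank codrop of a subset in a matroid perspective. -/
noncomputable def rcd {α : Type*} (M M' : Matroid α) (A : Set α) : ℕ :=
  ((rk M Set.univ : ℤ) - rk M' Set.univ - ((rk M A : ℤ) - rk M' A)).toNat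

/-! A set `A` is spanned by `A \ Q_M(A)`, by downward induction: the least element of a circuit
inside `A` lies in the closure of the rest of the circuit, whose elements are all larger. And
`A \ Q_M(A)` is independent, since the least element of any circuit inside it would belong to
`Q_M(A)`. So `A \ Q_M(A)` is a basis of `A`. -/

section

variable {α : Type*} {M : Matroid α} {A C I : Set α}

lemma isCircuit_iff_of_subset_ground (hC : C ⊆ M.E) : IsCircuit M C ↔ M.IsCircuit C := by
  rw [Matroid.isCircuit_iff_dep_forall_sdiff_singleton_indep, ← Matroid.not_indep_iff hC]
  rfl

lemma rk_eq_ncard_of_isBasis (hI : M.IsBasis I A) (hIfin : I.Finite) : rk M A = I.ncard := by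
  refine IsGreatest.csSup_eq ⟨⟨I, ⟨hI.subset, hI.indep⟩, rfl⟩, ?_⟩
  rintro _ ⟨J, ⟨hJA, hJ⟩, rfl⟩
  have hJI : J.encard ≤ I.encard := hI.encard_eq_eRk ▸ hJ.encard_le_eRk_of_subset hJA
  exact ENat.toNat_le_toNat hJI hIfin.encard_lt_top.ne

lemma Qset_subset [LinearOrder α] : Qset M A ⊆ A :=
  fun _ he ↦ he.1

lemma Matroid.IsCircuit.exists_mem_Qset [LinearOrder α] [WellFoundedLT α] (hC : M.IsCircuit C)
    (hCA : C ⊆ A) : ∃ e ∈ C, e ∈ Qset M A := by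
  have hmin := wellFounded_lt.min_mem C hC.nonempty
  refine ⟨_, hmin, hCA hmin, C, (isCircuit_iff_of_subset_ground hC.subset_ground).2 hC, hCA,
    hmin, fun f hf ↦ ?_⟩
  exact not_lt.1 (wellFounded_lt.not_lt_min C hf)

lemma indep_sdiff_Qset [LinearOrder α] [WellFoundedLT α] (hA : A ⊆ M.E) :
    M.Indep (A \ Qset M A) := by
  by_contra hdep
  obtain ⟨C, hCB, hC⟩ :=
    ((Matroid.not_indep_iff (sdiff_subset.trans hA)).1 hdep).exists_isCircuit_subset
  obtain ⟨e, heC, heQ⟩ := hC.exists_mem_Qset (hCB.trans sdiff_subset)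
  exact (hCB heC).2 heQ

lemma subset_closure_sdiff_Qset [LinearOrder α] [WellFoundedGT α] (hA : A ⊆ M.E) :
    A ⊆ M.closure (A \ Qset M A) := by
  intro e
  induction e using WellFoundedGT.induction with
  | _ e ih =>
  intro heA
  by_cases heQ : e ∈ Qset M A
  · obtain ⟨-, C, hC, hCA, heC, hemin⟩ := heQ
    have hC' := (isCircuit_iff_of_subset_ground (hCA.trans hA)).1 hC
    have hrest : C \ {e} ⊆ M.closure (A \ Qset M A) := fun f hf ↦
      ih f ((hemin f hf.1).lt_of_ne (Ne.symm hf.2)) (hCA hf.1)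
    exact M.closure_subset_closure_of_subset_closure hrest
      (hC'.mem_closure_sdiff_singleton_of_mem heC)
  · exact M.mem_closure_of_mem' ⟨heA, heQ⟩ (hA heA)

lemma isBasis_sdiff_Qset [LinearOrder α] [WellFoundedLT α] [WellFoundedGT α] (hA : A ⊆ M.E) :
    M.IsBasis (A \ Qset M A) A :=
  (indep_sdiff_Qset hA).isBasis_of_subset_of_subset_closure sdiff_subset
    (subset_closure_sdiff_Qset hA)

end

theorem nullity_eq_card_Qset {α : Type*} [Fintype α] [LinearOrder α]
    (M : Matroid α) (hE : M.E = Set.univ) (A : Set α) :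
    (Qset M A).ncard = A.ncard - rk M A := by
  have hB := isBasis_sdiff_Qset (hE ▸ subset_univ A : A ⊆ M.E)
  rw [rk_eq_ncard_of_isBasis hB (toFinite _), ← ncard_sdiff sdiff_subset,
    sdiff_sdiff_cancel_left Qset_subset]
end

section
/- Let M be a matroid on a finite linearly ordered set E, A ⊆ E, and e ∈ Ext_M(A) ∪ Q_M(A), i.e., e is the smallest element of some circuit of M contained in A ∪ {e}. Then there exists a circuit C of M with smallest element e such that e ∈ C ⊆ (A \ Q_M(A)) ∪ {e}. -/
open Set

/-!
Let `S` be the set of elements of `A \ Q_M(A)` above `e`. Every `f ∈ A` above `e` lies in the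
closure of `S`: either `f ∉ Q_M(A)`, or `f` is the smallest element of a circuit `D ⊆ A`, whose
other elements are larger and hence, by downward induction, already in `cl S`. Applying this to a
circuit through `e` in `A ∪ {e}` puts `e` in `cl S`, and since `e ∉ S` some circuit through `e` lies
in `S ∪ {e}`; every element of it is at least `e`.
-/

section

variable {α : Type*} {M : Matroid α} {C : Set α}

lemma isCircuit_iff_matroid_isCircuit (hCE : C ⊆ M.E) : IsCircuit M C ↔ M.IsCircuit C := by
  rw [Matroid.isCircuit_iff_dep_forall_sdiff_singleton_indep, ← Matroid.not_indep_iff hCE]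
  rfl

lemma Matroid.IsCircuit.isCircuit (hC : M.IsCircuit C) : _root_.IsCircuit M C :=
  (isCircuit_iff_matroid_isCircuit hC.subset_ground).2 hC

variable [LinearOrder α] {A : Set α} {e : α}

lemma SmallestIn.sdiff_singleton_subset_Ioi (he : SmallestIn e C) : C \ {e} ⊆ Ioi e :=
  fun f hf => (he.2 f hf.1).lt_of_ne (Ne.symm hf.2)

lemma exists_isCircuit_smallestIn_of_mem_closure {S : Set α} (hS : S ⊆ Ioi e)
    (he : e ∈ M.closure S) : ∃ C, IsCircuit M C ∧ SmallestIn e C ∧ C ⊆ S ∪ {e} := by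
  obtain ⟨C, hCS, hC, heC⟩ := M.exists_isCircuit_of_mem_closure he (fun h => lt_irrefl e (hS h))
  refine ⟨C, hC.isCircuit, ⟨heC, fun f hf => ?_⟩, by rwa [union_singleton]⟩
  rcases hCS hf with rfl | hfS
  · exact le_rfl
  · exact (hS hfS).le

lemma mem_closure_sdiff_Qset_inter_Ioi [WellFoundedGT α] (hA : A ⊆ M.E) {f : α} (hfA : f ∈ A)
    (hef : e < f) : f ∈ M.closure ((A \ Qset M A) ∩ Ioi e) := by
  induction f using WellFoundedGT.induction with
  | _ f ih =>
  by_cases hfQ : f ∈ Qset M A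
  · obtain ⟨-, D, hD, hDA, hfD⟩ := hfQ
    have hD' : M.IsCircuit D := (isCircuit_iff_matroid_isCircuit (hDA.trans hA)).1 hD
    refine M.closure_subset_closure_of_subset_closure (fun g hg => ?_)
      (hD'.mem_closure_sdiff_singleton_of_mem hfD.1)
    have hfg : f < g := hfD.sdiff_singleton_subset_Ioi hg
    exact ih g hfg (hDA hg.1) (hef.trans hfg)
  · exact M.mem_closure_of_mem' ⟨⟨hfA, hfQ⟩, hef⟩ (hA hfA)

end

theorem active_exists_circuit_avoiding_Qset {α : Type*} [Fintype α] [LinearOrder α]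
    (M : Matroid α) (hE : M.E = Set.univ) (A : Set α) (e : α)
    (he : e ∈ ExtSet M A ∪ Qset M A) :
    ∃ C : Set α, IsCircuit M C ∧ SmallestIn e C ∧ C ⊆ (A \ Qset M A) ∪ {e} := by
  obtain ⟨C, hC, hCA, heC⟩ : ∃ C, IsCircuit M C ∧ C ⊆ A ∪ {e} ∧ SmallestIn e C := by
    rcases he with ⟨-, hC⟩ | ⟨-, C, hC, hCA, heC⟩
    · exact hC
    · exact ⟨C, hC, hCA.trans subset_union_left, heC⟩
  have hC' : M.IsCircuit C := (isCircuit_iff_matroid_isCircuit (hE ▸ subset_univ C)).1 hC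
  have heS : e ∈ M.closure ((A \ Qset M A) ∩ Ioi e) := by
    refine M.closure_subset_closure_of_subset_closure (fun f hf => ?_)
      (hC'.mem_closure_sdiff_singleton_of_mem heC.1)
    exact mem_closure_sdiff_Qset_inter_Ioi (hE ▸ subset_univ A)
      ((hCA hf.1).resolve_right hf.2) (heC.sdiff_singleton_subset_Ioi hf)
  obtain ⟨C', hC', heC', hC'S⟩ := exists_isCircuit_smallestIn_of_mem_closure inter_subset_right heS
  exact ⟨C', hC', heC', hC'S.trans (union_subset_union_left _ inter_subset_left)⟩
end

section
/- If M → M' is a matroid perspective (M' a quotient of M on the same ground set E), then (M')* → M* is a matroid perspective, i.e., every flat of M* is a flat of (M')*. -/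
open Set

/-!
Being a quotient amounts to `M.closure X ⊆ M'.closure X` for all `X`. For `e ∉ X`, membership
`e ∈ M✶.closure X` says that `e` is not spanned by the rest of the complement of `X` in `M`, so
the inclusion of closures reverses under duality, and flats of `M✶` are closed in `M'✶`.
-/

namespace Matroid

variable {α : Type*} {M M' : Matroid α} {X : Set α} {e : α}

lemma closure_subset_closure_of_forall_isFlat (hE : M.E = M'.E)
    (h : ∀ F, M'.IsFlat F → M.IsFlat F) (X : Set α) : M.closure X ⊆ M'.closure X :=
  calc M.closure X = M.closure (X ∩ M'.E) := by rw [← hE, closure_inter_ground]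
    _ ⊆ M.closure (M'.closure X) := M.closure_subset_closure (M'.inter_ground_subset_closure X)
    _ = M'.closure X := (h _ (M'.isFlat_closure X)).closure

/-- `e` is a loop of `M✶ ／ X` exactly when it is a coloop of the dual minor `M ＼ X`. -/
lemma mem_dual_closure_iff_notMem_closure_compl (he : e ∈ M.E) (heX : e ∉ X) :
    e ∈ M✶.closure X ↔ e ∉ M.closure ((M.E \ X) \ {e}) := by
  have hloop : e ∈ M✶.closure X ↔ (M✶ ／ X).IsLoop e := by
    rw [contract_isLoop_iff_mem_closure, and_iff_left heX]
  rw [hloop, ← dual_isColoop_iff_isLoop, dual_contract_dual,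
    isColoop_iff_notMem_closure_compl (M := M ＼ X) ⟨he, heX⟩, delete_closure_eq, delete_ground]
  simp [heX, sdiff_right_comm]

lemma dual_closure_subset_dual_closure (hE : M.E = M'.E)
    (h : ∀ X, M.closure X ⊆ M'.closure X) (X : Set α) : M'✶.closure X ⊆ M✶.closure X := by
  intro e he
  have heE : e ∈ M'.E := M'✶.closure_subset_ground X he
  by_cases heX : e ∈ X
  · exact M✶.inter_ground_subset_closure X ⟨heX, hE ▸ heE⟩
  rw [mem_dual_closure_iff_notMem_closure_compl heE heX] at he
  rw [mem_dual_closure_iff_notMem_closure_compl (hE ▸ heE) heX, hE]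
  exact fun hM ↦ he (h _ hM)

end Matroid

theorem perspective_dual_general {α : Type*}
    (M M' : Matroid α) (hE : M.E = Set.univ) (hE' : M'.E = Set.univ)
    (h : ∀ F : Set α, M'.IsFlat F → M.IsFlat F) :
    ∀ F : Set α, M✶.IsFlat F → M'✶.IsFlat F := by
  have hEE : M.E = M'.E := hE.trans hE'.symm
  have hcl := M.dual_closure_subset_dual_closure hEE
    (M.closure_subset_closure_of_forall_isFlat hEE h)
  intro F hF
  rw [Matroid.isFlat_iff_closure_eq]
  exact ((hcl F).trans hF.closure.subset).antisymm
    (M'✶.subset_closure F (hEE ▸ hF.subset_ground))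

theorem perspective_dual {α : Type*} [Fintype α]
    (M M' : Matroid α) (hE : M.E = Set.univ) (hE' : M'.E = Set.univ)
    (h : ∀ F : Set α, M'.IsFlat F → M.IsFlat F) :
    ∀ F : Set α, M✶.IsFlat F → M'✶.IsFlat F :=
  perspective_dual_general M M' hE hE' h
end
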